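/- arXiv:0907.0314 — 2 statements merged into one kernel-verified Lean document; each statement's English description precedes it below -/
import Mathlib

section
/- For A, B ∈ M₂(ℝ̄), A ≤_R B if and only if PC(A) ⊆ PC(B); moreover, PC(A) is a closed convex subset of ℝ̂ for every A, and every closed convex subset of ℝ̂ equals PC(A) for some A ∈ M₂(ℝ̄). Consequently, the map A ↦ PC(A) induces an order isomorphism from the poset of principal right ideals of M₂(ℝ̄) ordered by inclusion onto the poset of closed convex subsets of ℝ̂ ordered by inclusion. -/
open scoped Classical ENNReal

/-- The tropical semiring `ℝ̄ = ℝ ∪ {-∞}`, carried by `WithBot ℝ`;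
tropical addition is `max` and tropical multiplication is `+`. -/
abbrev Rb : Type := WithBot ℝ

/-- Tropical matrix multiplication. -/
noncomputable def tMul {n : ℕ} (A B : Fin n → Fin n → Rb) : Fin n → Fin n → Rb :=
  fun i j => Finset.univ.sup fun k => A i k + B k j

/-- The column space of a matrix: all tropical linear combinations of its columns. -/
def ColSpace {n : ℕ} (A : Fin n → Fin n → Rb) : Set (Fin n → Rb) :=
  {v | ∃ c : Fin n → Rb, ∀ i, v i = Finset.univ.sup fun j => c j + A i j}

/-- The row space of a matrix: all tropical linear combinations of its rows. -/
def RowSpace {n : ℕ} (A : Fin n → Fin n → Rb) : Set (Fin n → Rb) :=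
  {v | ∃ c : Fin n → Rb, ∀ j, v j = Finset.univ.sup fun i => c i + A i j}

abbrev Mat2 : Type := Fin 2 → Fin 2 → Rb

/-- Inclusion of `ℝ̄` into the projective line `ℝ̂ = ℝ ∪ {-∞, +∞}` (modelled by `EReal`). -/
noncomputable def toE : Rb → EReal := WithBot.recBotCoe ⊥ (fun r : ℝ => (r : EReal))

/-- Projection of a vector `(a, b)` to `b - a ∈ ℝ̂`. -/
noncomputable def projPt (v : Fin 2 → Rb) : EReal := toE (v 1) - toE (v 0)

def zeroVec : Fin 2 → Rb := fun _ => ⊥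

/-- Projective column space. -/
noncomputable def PC (A : Mat2) : Set EReal :=
  {z | ∃ v ∈ ColSpace A, v ≠ zeroVec ∧ projPt v = z}

/-- Projective row space. -/
noncomputable def PR (A : Mat2) : Set EReal :=
  {z | ∃ v ∈ RowSpace A, v ≠ zeroVec ∧ projPt v = z}

/-- The metric `δ` on `ℝ̂`. -/
noncomputable def delta (x y : EReal) : ℝ≥0∞ :=
  if (∃ a : ℝ, x = (a : EReal)) ∧ (∃ b : ℝ, y = (b : EReal)) then
    ENNReal.ofReal |x.toReal - y.toReal|
  else if x = y then 0 else ⊤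

/-- `M` embeds isometrically into `N`. -/
def IsomEmbed (M N : Set EReal) : Prop :=
  ∃ f : EReal → EReal, Set.MapsTo f M N ∧ Set.InjOn f M ∧
    ∀ x ∈ M, ∀ y ∈ M, delta (f x) (f y) = delta x y

/-- `M` and `N` are isometric. -/
def Isom (M N : Set EReal) : Prop :=
  ∃ f : EReal → EReal, Set.BijOn f M N ∧
    ∀ x ∈ M, ∀ y ∈ M, delta (f x) (f y) = delta x y

/-- Closed convex subsets of `ℝ̂`: the empty set, singletons and closed intervals. -/
def IsClosedConvex (S : Set EReal) : Prop :=
  S = ∅ ∨ ∃ x y : EReal, x ≤ y ∧ S = Set.Icc x y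

/-- The principal right ideal generated by `A`. -/
noncomputable def rIdeal (A : Mat2) : Set Mat2 := {Z | ∃ X, Z = tMul A X}

/-!
Right multiplication by `X` replaces the columns of `A` by tropical combinations of them, so
`A ≤_R B` iff `C(A) ⊆ C(B)`. A column space is closed under adding real scalars, and two nonzero
vectors with the same projection differ by such a scalar, so `C(A) ⊆ C(B)` iff `PC(A) ⊆ PC(B)`.
The projection `b - a` of `(a, b)` is determined by which reals `r` satisfy `b ≤ r + a`, resp.
`r + a ≤ b`, and both conditions are preserved by `⊔`; so the projection of `v ⊔ w` lies between
those of `v` and `w`. Hence `PC(A)` is the interval spanned by the projections of the nonzero columns of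
`A`, and every interval is obtained from two suitable columns.
-/

open Set

lemma EReal.eq_of_forall_le_coe_iff {x y : EReal} (h : ∀ r : ℝ, x ≤ r ↔ y ≤ r) : x = y :=
  le_antisymm (EReal.le_of_forall_lt_iff_le.1 fun r hr => (h r).2 hr.le)
    (EReal.le_of_forall_lt_iff_le.1 fun r hr => (h r).1 hr.le)

lemma Fin.univ_sup_two {α : Type*} [SemilatticeSup α] [OrderBot α] {j k : Fin 2} (hjk : j ≠ k)
    (f : Fin 2 → α) : Finset.univ.sup f = f j ⊔ f k := by
  fin_cases j <;> fin_cases k <;> simp_all [Fin.univ_succ, sup_comm]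

section Vectors

variable {u v w : Fin 2 → Rb}

@[simp] lemma toE_bot : toE ⊥ = ⊥ := rfl

@[simp] lemma toE_coe (r : ℝ) : toE r = r := rfl

@[simp] lemma toE_zero : toE 0 = 0 := rfl

lemma zeroVec_eq_bot : zeroVec = (⊥ : Fin 2 → Rb) := rfl

lemma ne_zeroVec_iff : v ≠ zeroVec ↔ v 0 ≠ ⊥ ∨ v 1 ≠ ⊥ := by
  simp only [Ne, zeroVec, funext_iff, Fin.forall_fin_two]; tauto

lemma bot_vadd_eq_zeroVec (v : Fin 2 → Rb) : (⊥ : Rb) +ᵥ v = zeroVec := by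
  ext i; simp [zeroVec]

lemma vadd_zeroVec (a : Rb) : a +ᵥ zeroVec = zeroVec := by
  ext i; simp [zeroVec]

lemma vadd_ne_zeroVec (l : ℝ) (hv : v ≠ zeroVec) : (l : Rb) +ᵥ v ≠ zeroVec := by
  rw [ne_zeroVec_iff] at hv ⊢
  simpa [WithBot.add_eq_bot] using hv

lemma projPt_le_coe_iff (hv : v ≠ zeroVec) (r : ℝ) : projPt v ≤ r ↔ v 1 ≤ r + v 0 := by
  rw [ne_zeroVec_iff] at hv
  unfold projPt
  cases h0 : v 0 using WithBot.recBotCoe with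
  | bot => cases h1 : v 1 using WithBot.recBotCoe with
    | bot => simp_all
    | coe b => simp [EReal.sub_bot]
  | coe a => cases h1 : v 1 using WithBot.recBotCoe with
    | bot => simp
    | coe b =>
      simp only [toE_coe]
      norm_cast
      rw [sub_le_iff_le_add]

lemma coe_le_projPt_iff (hv : v ≠ zeroVec) (r : ℝ) : r ≤ projPt v ↔ r + v 0 ≤ v 1 := by
  rw [ne_zeroVec_iff] at hv
  unfold projPt
  cases h0 : v 0 using WithBot.recBotCoe with
  | bot => cases h1 : v 1 using WithBot.recBotCoe with
    | bot => simp_all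
    | coe b => simp [EReal.sub_bot]
  | coe a => cases h1 : v 1 using WithBot.recBotCoe with
    | bot => simp
    | coe b =>
      simp only [toE_coe]
      norm_cast
      rw [le_sub_iff_add_le]

lemma projPt_vadd (l : ℝ) (v : Fin 2 → Rb) : projPt ((l : Rb) +ᵥ v) = projPt v := by
  by_cases hv : v = zeroVec
  · rw [hv, vadd_zeroVec]
  refine EReal.eq_of_forall_le_coe_iff fun r => ?_
  rw [projPt_le_coe_iff (vadd_ne_zeroVec l hv), projPt_le_coe_iff hv, Pi.vadd_apply,
    Pi.vadd_apply, vadd_eq_add, vadd_eq_add, add_left_comm,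
    WithBot.add_le_add_iff_left WithBot.coe_ne_bot]

lemma projPt_sup_mem_uIcc (hv : v ≠ zeroVec) (hw : w ≠ zeroVec) :
    projPt (v ⊔ w) ∈ uIcc (projPt v) (projPt w) := by
  have hvw : v ⊔ w ≠ zeroVec := ne_bot_of_le_ne_bot hv le_sup_left
  constructor
  · refine EReal.ge_of_forall_gt_iff_ge.1 fun r hr => ?_
    have hrv := (coe_le_projPt_iff hv r).1 (hr.trans_le inf_le_left).le
    have hrw := (coe_le_projPt_iff hw r).1 (hr.trans_le inf_le_right).le
    rw [coe_le_projPt_iff hvw, Pi.sup_apply, Pi.sup_apply, ← max_add_add_left]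
    exact sup_le_sup hrv hrw
  · refine EReal.le_of_forall_lt_iff_le.1 fun r hr => ?_
    have hvr := (projPt_le_coe_iff hv r).1 (le_sup_left.trans_lt hr).le
    have hwr := (projPt_le_coe_iff hw r).1 (le_sup_right.trans_lt hr).le
    rw [projPt_le_coe_iff hvw, Pi.sup_apply, Pi.sup_apply, ← max_add_add_left]
    exact sup_le_sup hvr hwr

noncomputable def projPtRep : EReal → Fin 2 → Rb :=
  EReal.rec (motive := fun _ => Fin 2 → Rb) ![0, ⊥] (fun r => ![0, r]) ![⊥, 0]

lemma projPt_projPtRep (z : EReal) : projPt (projPtRep z) = z := by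
  induction z <;> simp [projPtRep, projPt]

lemma projPtRep_ne_zeroVec (z : EReal) : projPtRep z ≠ zeroVec := by
  induction z <;> simp [projPtRep, ne_zeroVec_iff]

lemma exists_eq_vadd_projPtRep (hv : v ≠ zeroVec) :
    ∃ l : ℝ, v = (l : Rb) +ᵥ projPtRep (projPt v) := by
  rw [ne_zeroVec_iff] at hv
  cases h0 : v 0 using WithBot.recBotCoe with
  | bot =>
    obtain ⟨b, h1⟩ := WithBot.ne_bot_iff_exists.1 (hv.resolve_left (not_not.2 h0))
    refine ⟨b, funext fun i => ?_⟩
    fin_cases i <;> simp [projPt, h0, ← h1, projPtRep]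
  | coe a =>
    refine ⟨a, funext fun i => ?_⟩
    cases h1 : v 1 using WithBot.recBotCoe <;> fin_cases i <;>
      simp [projPt, h0, h1, projPtRep, ← EReal.coe_sub, ← WithBot.coe_add]

lemma exists_sup_vadd_projPt_eq {r : ℝ} (hu0 : u ≠ zeroVec) (hw0 : w ≠ zeroVec)
    (hu : projPt u < r) (hw : r < projPt w) :
    ∃ a b : ℝ, ((a : Rb) +ᵥ u) ⊔ ((b : Rb) +ᵥ w) ≠ zeroVec ∧
      projPt (((a : Rb) +ᵥ u) ⊔ ((b : Rb) +ᵥ w)) = r := by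
  have hu' : u 1 < r + u 0 := by
    simpa only [not_le, coe_le_projPt_iff hu0] using hu.not_ge
  have hw' : r + w 0 < w 1 := by
    simpa only [not_le, projPt_le_coe_iff hw0] using hw.not_ge
  obtain ⟨x, hx⟩ : ∃ x : ℝ, (x : Rb) = u 0 := WithBot.ne_bot_iff_exists.1 fun h => by
    simp [h] at hu'
  obtain ⟨y, hy⟩ : ∃ y : ℝ, (y : Rb) = w 1 := WithBot.ne_bot_iff_exists.1 fun h => by
    simp [h] at hw'
  -- the `u`-term then carries the first coordinate and the `w`-term the second: `s = (0, r)`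
  refine ⟨-x, r - y, ?_⟩
  set s := (((-x : ℝ) : Rb) +ᵥ u) ⊔ (((r - y : ℝ) : Rb) +ᵥ w)
  have h0 : s 0 = (0 : ℝ) := by
    simp only [s, Pi.sup_apply, Pi.vadd_apply, vadd_eq_add, ← hx]
    rw [sup_eq_left.2]
    · norm_cast; ring
    cases h : w 0 using WithBot.recBotCoe with
    | bot => simp
    | coe c => rw [h, ← hy] at hw'; norm_cast at hw' ⊢; linarith
  have h1 : s 1 = r := by
    simp only [s, Pi.sup_apply, Pi.vadd_apply, vadd_eq_add, ← hy]
    rw [sup_eq_right.2]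
    · norm_cast; ring
    cases h : u 1 using WithBot.recBotCoe with
    | bot => simp
    | coe c => rw [h, ← hx] at hu'; norm_cast at hu' ⊢; linarith
  refine ⟨ne_zeroVec_iff.2 (Or.inr (by simp [h1])), ?_⟩
  simp [projPt, h0, h1]

lemma projPt_vadd_of_ne_zeroVec {a : Rb} (h : a +ᵥ v ≠ zeroVec) :
    projPt (a +ᵥ v) = projPt v := by
  cases a using WithBot.recBotCoe with
  | bot => exact absurd (bot_vadd_eq_zeroVec v) h
  | coe l => exact projPt_vadd l v

lemma exists_eq_vadd_of_projPt_eq (hv : v ≠ zeroVec) (hw : w ≠ zeroVec)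
    (h : projPt v = projPt w) : ∃ l : ℝ, v = (l : Rb) +ᵥ w := by
  obtain ⟨l, hl⟩ := exists_eq_vadd_projPtRep hv
  obtain ⟨m, hm⟩ := exists_eq_vadd_projPtRep hw
  refine ⟨l - m, ?_⟩
  calc v = (l : Rb) +ᵥ projPtRep (projPt w) := h ▸ hl
    _ = ((l - m : ℝ) : Rb) +ᵥ ((m : Rb) +ᵥ projPtRep (projPt w)) := by
      rw [vadd_vadd, ← WithBot.coe_add, sub_add_cancel]
    _ = ((l - m : ℝ) : Rb) +ᵥ w := by rw [← hm]

end Vectors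

def col {n : ℕ} (A : Fin n → Fin n → Rb) (j : Fin n) : Fin n → Rb := fun i => A i j

lemma exists_tMul_eq_iff {n : ℕ} (A B : Fin n → Fin n → Rb) :
    (∃ X, A = tMul B X) ↔ ∀ j, col A j ∈ ColSpace B := by
  constructor
  · rintro ⟨X, rfl⟩ j
    exact ⟨fun k => X k j, fun i => by simp only [col, tMul, add_comm]⟩
  · intro h
    choose c hc using h
    exact ⟨fun k j => c j k, funext₂ fun i j => (hc j i).trans (by simp only [tMul, add_comm])⟩

section ColSpace

variable {A B : Mat2} {v w : Fin 2 → Rb}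

lemma mem_colSpace_iff {j k : Fin 2} (hjk : j ≠ k) :
    v ∈ ColSpace A ↔ ∃ c : Fin 2 → Rb, v = (c j +ᵥ col A j) ⊔ (c k +ᵥ col A k) := by
  simp only [ColSpace, Set.mem_ofPred_eq, Fin.univ_sup_two hjk, funext_iff]
  rfl

lemma col_mem_colSpace (A : Mat2) (j : Fin 2) : col A j ∈ ColSpace A := by
  refine (mem_colSpace_iff (j := j) (k := j + 1) (by simp)).2
    ⟨fun m => if m = j then 0 else ⊥, ?_⟩
  simp [bot_vadd_eq_zeroVec, zeroVec_eq_bot]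

lemma vadd_mem_colSpace (a : Rb) (hv : v ∈ ColSpace A) : a +ᵥ v ∈ ColSpace A := by
  obtain ⟨c, rfl⟩ := (mem_colSpace_iff zero_ne_one).1 hv
  refine (mem_colSpace_iff zero_ne_one).2 ⟨a +ᵥ c, ?_⟩
  ext i
  simp [max_add_add_left, add_assoc]

lemma sup_mem_colSpace (hv : v ∈ ColSpace A) (hw : w ∈ ColSpace A) : v ⊔ w ∈ ColSpace A := by
  obtain ⟨c, rfl⟩ := (mem_colSpace_iff zero_ne_one).1 hv
  obtain ⟨d, rfl⟩ := (mem_colSpace_iff zero_ne_one).1 hw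
  refine (mem_colSpace_iff zero_ne_one).2 ⟨c ⊔ d, ?_⟩
  ext i
  simp only [Pi.sup_apply, Pi.vadd_apply, vadd_eq_add, ← max_add_add_right]
  ac_rfl

lemma zeroVec_mem_colSpace (A : Mat2) : zeroVec ∈ ColSpace A :=
  bot_vadd_eq_zeroVec (col A 0) ▸ vadd_mem_colSpace ⊥ (col_mem_colSpace A 0)

lemma colSpace_subset_iff : ColSpace A ⊆ ColSpace B ↔ ∀ j, col A j ∈ ColSpace B := by
  refine ⟨fun h j => h (col_mem_colSpace A j), fun h v hv => ?_⟩
  obtain ⟨c, rfl⟩ := (mem_colSpace_iff zero_ne_one).1 hv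
  exact sup_mem_colSpace (vadd_mem_colSpace _ (h 0)) (vadd_mem_colSpace _ (h 1))

lemma mem_rIdeal_iff {Z : Mat2} : Z ∈ rIdeal A ↔ ColSpace Z ⊆ ColSpace A :=
  (exists_tMul_eq_iff Z A).trans colSpace_subset_iff.symm

lemma rIdeal_subset_iff : rIdeal A ⊆ rIdeal B ↔ ColSpace A ⊆ ColSpace B :=
  ⟨fun h => mem_rIdeal_iff.1 (h (mem_rIdeal_iff.2 subset_rfl)),
    fun h _ hZ => mem_rIdeal_iff.2 ((mem_rIdeal_iff.1 hZ).trans h)⟩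

lemma colSpace_subset_iff_PC_subset : ColSpace A ⊆ ColSpace B ↔ PC A ⊆ PC B := by
  refine ⟨fun h _ ⟨v, hv, hv0, hz⟩ => ⟨v, h hv, hv0, hz⟩, fun h v hv => ?_⟩
  by_cases hv0 : v = zeroVec
  · exact hv0 ▸ zeroVec_mem_colSpace B
  obtain ⟨w, hw, hw0, hvw⟩ := h ⟨v, hv, hv0, rfl⟩
  obtain ⟨l, rfl⟩ := exists_eq_vadd_of_projPt_eq hv0 hw0 hvw.symm
  exact vadd_mem_colSpace _ hw

lemma PC_eq_empty (h0 : col A 0 = zeroVec) (h1 : col A 1 = zeroVec) : PC A = ∅ := by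
  refine eq_empty_of_forall_notMem fun z ⟨v, hv, hv0, _⟩ => hv0 ?_
  obtain ⟨c, rfl⟩ := (mem_colSpace_iff zero_ne_one).1 hv
  rw [h0, h1, vadd_zeroVec, vadd_zeroVec, zeroVec_eq_bot, sup_idem]

lemma PC_eq_singleton {j k : Fin 2} (hjk : j ≠ k) (hj : col A j = zeroVec)
    (hk : col A k ≠ zeroVec) : PC A = {projPt (col A k)} := by
  refine Subset.antisymm ?_ (singleton_subset_iff.2 ⟨_, col_mem_colSpace A k, hk, rfl⟩)
  rintro _ ⟨v, hv, hv0, rfl⟩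
  obtain ⟨c, rfl⟩ := (mem_colSpace_iff hjk).1 hv
  rw [hj, vadd_zeroVec, zeroVec_eq_bot, bot_sup_eq] at hv0 ⊢
  exact projPt_vadd_of_ne_zeroVec hv0

lemma PC_subset_uIcc (h0 : col A 0 ≠ zeroVec) (h1 : col A 1 ≠ zeroVec) :
    PC A ⊆ uIcc (projPt (col A 0)) (projPt (col A 1)) := by
  rintro _ ⟨v, hv, hv0, rfl⟩
  obtain ⟨c, rfl⟩ := (mem_colSpace_iff zero_ne_one).1 hv
  generalize c 0 = a, c 1 = b at hv0 ⊢
  cases a using WithBot.recBotCoe with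
  | bot =>
    rw [bot_vadd_eq_zeroVec, zeroVec_eq_bot, bot_sup_eq] at hv0 ⊢
    rw [projPt_vadd_of_ne_zeroVec hv0]
    exact right_mem_uIcc
  | coe a => cases b using WithBot.recBotCoe with
    | bot =>
      rw [bot_vadd_eq_zeroVec, zeroVec_eq_bot, sup_bot_eq, projPt_vadd]
      exact left_mem_uIcc
    | coe b =>
      have h := projPt_sup_mem_uIcc (vadd_ne_zeroVec a h0) (vadd_ne_zeroVec b h1)
      rwa [projPt_vadd, projPt_vadd] at h

lemma Icc_subset_PC {j k : Fin 2} (hj : col A j ≠ zeroVec) (hk : col A k ≠ zeroVec) :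
    Icc (projPt (col A j)) (projPt (col A k)) ⊆ PC A := by
  rintro z ⟨hjz, hzk⟩
  rcases hjz.eq_or_lt with rfl | hjz
  · exact ⟨_, col_mem_colSpace A j, hj, rfl⟩
  rcases hzk.eq_or_lt with rfl | hzk
  · exact ⟨_, col_mem_colSpace A k, hk, rfl⟩
  lift z to ℝ using ⟨hzk.ne_top, hjz.ne_bot⟩
  obtain ⟨a, b, hne, hz⟩ := exists_sup_vadd_projPt_eq hj hk hjz hzk
  exact ⟨_, sup_mem_colSpace (vadd_mem_colSpace _ (col_mem_colSpace A j))
    (vadd_mem_colSpace _ (col_mem_colSpace A k)), hne, hz⟩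

lemma PC_eq_uIcc (h0 : col A 0 ≠ zeroVec) (h1 : col A 1 ≠ zeroVec) :
    PC A = uIcc (projPt (col A 0)) (projPt (col A 1)) := by
  refine (PC_subset_uIcc h0 h1).antisymm ?_
  rcases le_total (projPt (col A 0)) (projPt (col A 1)) with h | h
  · rw [uIcc_of_le h]; exact Icc_subset_PC h0 h1
  · rw [uIcc_of_ge h]; exact Icc_subset_PC h1 h0

end ColSpace

lemma isClosedConvex_singleton (x : EReal) : IsClosedConvex {x} :=
  Or.inr ⟨x, x, le_rfl, (Icc_self x).symm⟩

lemma isClosedConvex_uIcc (x y : EReal) : IsClosedConvex (uIcc x y) :=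
  Or.inr ⟨_, _, inf_le_sup, rfl⟩

lemma isClosedConvex_PC (A : Mat2) : IsClosedConvex (PC A) := by
  by_cases h0 : col A 0 = zeroVec <;> by_cases h1 : col A 1 = zeroVec
  · exact Or.inl (PC_eq_empty h0 h1)
  · exact PC_eq_singleton zero_ne_one h0 h1 ▸ isClosedConvex_singleton _
  · exact PC_eq_singleton one_ne_zero h1 h0 ▸ isClosedConvex_singleton _
  · exact PC_eq_uIcc h0 h1 ▸ isClosedConvex_uIcc _ _

lemma exists_PC_eq_uIcc (x y : EReal) : ∃ A : Mat2, PC A = uIcc x y := by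
  let A : Mat2 := fun i j => ![projPtRep x, projPtRep y] j i
  have h0 : col A 0 = projPtRep x := rfl
  have h1 : col A 1 = projPtRep y := rfl
  refine ⟨A, ?_⟩
  rw [PC_eq_uIcc (h0 ▸ projPtRep_ne_zeroVec x) (h1 ▸ projPtRep_ne_zeroVec y), h0, h1,
    projPt_projPtRep, projPt_projPtRep]

lemma isClosedConvex_iff_exists_PC_eq {S : Set EReal} : IsClosedConvex S ↔ ∃ A, PC A = S := by
  refine ⟨fun hS => ?_, fun ⟨A, hA⟩ => hA ▸ isClosedConvex_PC A⟩
  rcases hS with rfl | ⟨x, y, hxy, rfl⟩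
  · exact ⟨fun _ _ => ⊥, PC_eq_empty rfl rfl⟩
  · exact uIcc_of_le hxy ▸ exists_PC_eq_uIcc x y

theorem exists_orderIso_of_le_iff_le {α β γ : Type*} [PartialOrder β] [PartialOrder γ]
    {f : α → β} {g : α → γ} (h : ∀ a b, f a ≤ f b ↔ g a ≤ g b) {P : γ → Prop}
    (hP : ∀ c, P c ↔ ∃ a, g a = c) :
    ∃ φ : {x // ∃ a, x = f a} ≃o {c // P c}, ∀ a, (φ ⟨f a, a, rfl⟩ : γ) = g a := by
  have hg : ∀ a b, f a = f b → g a = g b := fun a b hab =>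
    le_antisymm ((h a b).1 hab.le) ((h b a).1 hab.ge)
  let φ : {x // ∃ a, x = f a} ↪o {c // P c} :=
    OrderEmbedding.ofMapLEIff (fun x => ⟨g x.2.choose, (hP _).2 ⟨_, rfl⟩⟩) fun x y => by
      rw [Subtype.mk_le_mk, ← h, Subtype.mk_le_mk, ← x.2.choose_spec, ← y.2.choose_spec]
  have hφ : ∀ a, (φ ⟨f a, a, rfl⟩ : γ) = g a := fun a =>
    hg _ _ (Exists.choose_spec (p := fun b => f a = f b) ⟨a, rfl⟩).symm
  refine ⟨OrderIso.ofSurjective φ fun c => ?_, hφ⟩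
  obtain ⟨a, ha⟩ := (hP c).1 c.2
  exact ⟨⟨f a, a, rfl⟩, Subtype.ext ((hφ a).trans ha)⟩

lemma exists_tMul_eq_iff_PC_subset {A B : Mat2} : (∃ X, A = tMul B X) ↔ PC A ⊆ PC B :=
  mem_rIdeal_iff.trans colSpace_subset_iff_PC_subset

lemma rIdeal_subset_iff_PC_subset {A B : Mat2} : rIdeal A ⊆ rIdeal B ↔ PC A ⊆ PC B :=
  rIdeal_subset_iff.trans colSpace_subset_iff_PC_subset

/-- `A ≤_R B` iff `PC(A) ⊆ PC(B)`; `PC(A)` is always closed convex; every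
closed convex subset of `ℝ̂` arises as some `PC(A)`; and consequently `A ↦ PC(A)` induces
an order isomorphism from the poset of principal right ideals (under inclusion) onto the
poset of closed convex subsets of `ℝ̂` (under inclusion). -/
theorem right_ideals_order_iso_closed_convex :
    (∀ A B : Mat2, (∃ X, A = tMul B X) ↔ PC A ⊆ PC B) ∧
    (∀ A : Mat2, IsClosedConvex (PC A)) ∧
    (∀ S : Set EReal, IsClosedConvex S → ∃ A : Mat2, PC A = S) ∧
    ∃ φ : {I : Set Mat2 // ∃ A, I = rIdeal A} ≃o {S : Set EReal // IsClosedConvex S},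
      ∀ A : Mat2, (φ ⟨rIdeal A, ⟨A, rfl⟩⟩ : Set EReal) = PC A :=
  ⟨fun _ _ => exists_tMul_eq_iff_PC_subset, isClosedConvex_PC,
    fun _ => isClosedConvex_iff_exists_PC_eq.1,
    exists_orderIso_of_le_iff_le (fun _ _ => rIdeal_subset_iff_PC_subset)
      fun _ => isClosedConvex_iff_exists_PC_eq⟩
end

section
/- Let M and N be distinct closed convex subsets of ℝ̂. Then M ≅ N if and only if one of the following holds: (i) M and N are both singletons; (ii) M and N are both closed intervals with more than one point and of the same finite diameter; (iii) M and N are both closed intervals with one real endpoint and one endpoint in {−∞, +∞}. -/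
/-!
An isometry preserves cardinality and diameter. A nontrivial closed convex set of finite
diameter is a real interval `[a, b]`, and two such intervals of the same length differ by a
translation. One of infinite diameter is either a half-line, and all half-lines are isometric to
`[-∞, 0]` through translations and the reflection `x ↦ -x`, or the whole line `ℝ̂`, the only
closed convex set containing three points pairwise at infinite distance.
-/

open scoped Classical ENNReal

/-- The diameter of a subset of `ℝ̂` with respect to `δ` (the supremum of the empty
set being `0`). -/
noncomputable def diam (S : Set EReal) : ℝ≥0∞ := ⨆ x ∈ S, ⨆ y ∈ S, delta x y

open Set

theorem delta_coe_coe (a b : ℝ) : delta a b = ENNReal.ofReal |a - b| := by simp [delta]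

@[simp] theorem delta_self (x : EReal) : delta x x = 0 := by induction x <;> simp [delta]

theorem delta_eq_zero_iff {x y : EReal} : delta x y = 0 ↔ x = y := by
  induction x <;> induction y <;> simp [delta, sub_eq_zero]

theorem delta_ne_top_iff {x y : EReal} :
    delta x y ≠ ⊤ ↔ x = y ∨ (∃ a : ℝ, x = a) ∧ ∃ b : ℝ, y = b := by
  induction x <;> induction y <;> simp [delta]

theorem delta_add_coe (x y : EReal) (c : ℝ) : delta (x + c) (y + c) = delta x y := by
  induction x <;> induction y <;> simp [delta, ← EReal.coe_add, add_sub_add_right_eq_sub]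

theorem delta_neg (x y : EReal) : delta (-x) (-y) = delta x y := by
  induction x <;> induction y <;> simp [delta, ← EReal.coe_neg, neg_add_eq_sub, abs_sub_comm]

def HasInfiniteTriangle (S : Set EReal) : Prop :=
  ∃ x ∈ S, ∃ y ∈ S, ∃ z ∈ S, delta x y = ⊤ ∧ delta y z = ⊤ ∧ delta x z = ⊤

theorem HasInfiniteTriangle.bot_mem_and_top_mem {S : Set EReal} (h : HasInfiniteTriangle S) :
    ⊥ ∈ S ∧ ⊤ ∈ S := by
  -- two of the three points are not real, and they are distinct
  obtain ⟨x, hx, y, hy, z, hz, hxy, hyz, hxz⟩ := h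
  induction x <;> induction y <;> induction z <;> simp_all [delta]

theorem hasInfiniteTriangle_univ : HasInfiniteTriangle (univ : Set EReal) :=
  ⟨⊥, trivial, (0 : ℝ), trivial, ⊤, trivial, by simp [delta]⟩

theorem delta_le_diam {S : Set EReal} {x y : EReal} (hx : x ∈ S) (hy : y ∈ S) :
    delta x y ≤ diam S :=
  le_iSup₂_of_le x hx (le_iSup₂_of_le y hy le_rfl)

theorem diam_Icc_coe_coe {a b : ℝ} (hab : a ≤ b) :
    diam (Icc (a : EReal) b) = ENNReal.ofReal (b - a) := by
  refine le_antisymm ?_ ?_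
  · rw [diam, ← EReal.image_coe_Icc]
    simp only [iSup_image, delta_coe_coe]
    refine iSup₂_le fun r hr => iSup₂_le fun s hs => ENNReal.ofReal_le_ofReal ?_
    exact abs_sub_le_iff.2 ⟨by linarith [hr.2, hs.1], by linarith [hr.1, hs.2]⟩
  · have hb : (b : EReal) ∈ Icc (a : EReal) b := right_mem_Icc.2 (EReal.coe_le_coe_iff.2 hab)
    have ha : (a : EReal) ∈ Icc (a : EReal) b := left_mem_Icc.2 (EReal.coe_le_coe_iff.2 hab)
    simpa [delta_coe_coe, abs_of_nonneg (sub_nonneg.2 hab)] using delta_le_diam hb ha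

theorem isom_image {S : Set EReal} {f : EReal → EReal}
    (hf : ∀ x ∈ S, ∀ y ∈ S, delta (f x) (f y) = delta x y) : Isom S (f '' S) := by
  refine ⟨f, InjOn.bijOn_image fun x hx y hy hxy => ?_, hf⟩
  rw [← delta_eq_zero_iff, ← hf x hx y hy, hxy, delta_self]

namespace Isom

variable {S T U : Set EReal}

theorem symm (h : Isom S T) : Isom T S := by
  obtain ⟨f, hf, hδ⟩ := h
  have hinv := hf.invOn_invFunOn
  refine ⟨Function.invFunOn f S, hf.symm hinv.symm, fun x hx y hy => ?_⟩
  have hx' := hf.surjOn.mapsTo_invFunOn hx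
  have hy' := hf.surjOn.mapsTo_invFunOn hy
  rw [← hδ _ hx' _ hy', hinv.2 hx, hinv.2 hy]

theorem trans (h₁ : Isom S T) (h₂ : Isom T U) : Isom S U := by
  obtain ⟨f, hf, hδf⟩ := h₁
  obtain ⟨g, hg, hδg⟩ := h₂
  refine ⟨g ∘ f, hg.comp hf, fun x hx y hy => ?_⟩
  rw [Function.comp_apply, Function.comp_apply, hδg _ (hf.mapsTo hx) _ (hf.mapsTo hy),
    hδf x hx y hy]

theorem diam_eq (h : Isom S T) : diam S = diam T := by
  obtain ⟨f, hf, hδ⟩ := h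
  rw [← hf.image_eq, diam, diam]
  simp only [iSup_image]
  exact biSup_congr fun x hx => biSup_congr fun y hy => (hδ x hx y hy).symm

theorem nontrivial (h : Isom S T) (hS : S.Nontrivial) : T.Nontrivial := by
  obtain ⟨f, hf, -⟩ := h
  exact hf.image_eq ▸ hS.image_of_injOn hf.injOn

theorem hasInfiniteTriangle (h : Isom S T) (hS : HasInfiniteTriangle S) :
    HasInfiniteTriangle T := by
  obtain ⟨f, hf, hδ⟩ := h
  obtain ⟨x, hx, y, hy, z, hz, hxy, hyz, hxz⟩ := hS
  exact ⟨f x, hf.mapsTo hx, f y, hf.mapsTo hy, f z, hf.mapsTo hz,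
    by rwa [hδ x hx y hy], by rwa [hδ y hy z hz], by rwa [hδ x hx z hz]⟩

end Isom

noncomputable def addCoeOrderIso (c : ℝ) : EReal ≃o EReal where
  toFun x := x + c
  invFun x := x - c
  left_inv _ := EReal.add_sub_cancel_right
  right_inv _ := EReal.sub_add_cancel
  map_rel_iff' := (EReal.addLECancellable_coe c).add_le_add_iff_right

theorem isom_Icc_add_coe (x y : EReal) (c : ℝ) : Isom (Icc x y) (Icc (x + c) (y + c)) := by
  have := isom_image (S := Icc x y) (f := addCoeOrderIso c) fun u _ v _ => delta_add_coe u v c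
  rwa [OrderIso.image_Icc] at this

theorem isom_Icc_neg (x y : EReal) : Isom (Icc x y) (Icc (-y) (-x)) := by
  have hIcc : Neg.neg '' Icc x y = Icc (-y) (-x) := by
    ext z
    simp only [image_neg_eq_neg, mem_neg, mem_Icc, EReal.le_neg, EReal.neg_le, and_comm]
  rw [← hIcc]
  exact isom_image fun u _ v _ => delta_neg u v

theorem isom_singleton (x y : EReal) : Isom {x} {y} := by
  have := isom_image (S := {x}) (f := fun _ => y) (by simp)
  rwa [image_singleton] at this

theorem isom_Icc_coe_coe_of_sub_eq {a b c d : ℝ} (h : b - a = d - c) :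
    Isom (Icc (a : EReal) b) (Icc (c : EReal) d) := by
  have := isom_Icc_add_coe a b (c - a)
  rwa [← EReal.coe_add, ← EReal.coe_add, add_sub_cancel, show b + (c - a) = d by linarith]
    at this

def IsHalfLine (S : Set EReal) : Prop :=
  ∃ a : ℝ, S = Icc ⊥ (a : EReal) ∨ S = Icc (a : EReal) ⊤

theorem IsHalfLine.isom_Icc_bot_zero {S : Set EReal} (hS : IsHalfLine S) : Isom S (Icc ⊥ 0) := by
  obtain ⟨a, rfl | rfl⟩ := hS
  · have := isom_Icc_add_coe ⊥ a (-a)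
    rwa [EReal.bot_add, ← EReal.coe_add, add_neg_cancel, EReal.coe_zero] at this
  · have := (isom_Icc_neg a ⊤).trans (isom_Icc_add_coe _ _ a)
    rwa [EReal.neg_top, EReal.bot_add, ← EReal.coe_neg, ← EReal.coe_add, neg_add_cancel,
      EReal.coe_zero] at this

theorem IsHalfLine.isom {S T : Set EReal} (hS : IsHalfLine S) (hT : IsHalfLine T) : Isom S T :=
  hS.isom_Icc_bot_zero.trans hT.isom_Icc_bot_zero.symm

namespace IsClosedConvex

variable {S : Set EReal}

theorem exists_Icc_of_nontrivial (hS : IsClosedConvex S) (hnt : S.Nontrivial) :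
    ∃ x y, x < y ∧ S = Icc x y := by
  obtain rfl | ⟨x, y, hxy, rfl⟩ := hS
  · exact absurd hnt.nonempty not_nonempty_empty
  refine ⟨x, y, hxy.lt_of_ne ?_, rfl⟩
  rintro rfl
  exact hnt.ne_singleton (Icc_self x)

theorem exists_coe_of_diam_ne_top (hS : IsClosedConvex S) (hnt : S.Nontrivial)
    (hd : diam S ≠ ⊤) : ∃ a b : ℝ, a ≤ b ∧ S = Icc (a : EReal) b := by
  obtain ⟨x, y, hxy, rfl⟩ := hS.exists_Icc_of_nontrivial hnt
  have hfin : delta x y ≠ ⊤ :=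
    ne_top_of_le_ne_top hd (delta_le_diam (left_mem_Icc.2 hxy.le) (right_mem_Icc.2 hxy.le))
  obtain ⟨⟨a, rfl⟩, ⟨b, rfl⟩⟩ := (delta_ne_top_iff.1 hfin).resolve_left hxy.ne
  exact ⟨a, b, EReal.coe_le_coe_iff.1 hxy.le, rfl⟩

theorem isHalfLine_or_eq_univ (hS : IsClosedConvex S) (hnt : S.Nontrivial) (hd : diam S = ⊤) :
    IsHalfLine S ∨ S = univ := by
  obtain ⟨x, y, hxy, rfl⟩ := hS.exists_Icc_of_nontrivial hnt
  induction x with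
  | bot =>
    induction y with
    | bot => exact absurd hxy (lt_irrefl _)
    | coe b => exact Or.inl ⟨b, Or.inl rfl⟩
    | top => exact Or.inr Icc_bot_top
  | coe a =>
    induction y with
    | bot => exact absurd hxy not_lt_bot
    | coe b =>
      rw [diam_Icc_coe_coe (EReal.coe_le_coe_iff.1 hxy.le)] at hd
      exact absurd hd ENNReal.ofReal_ne_top
    | top => exact Or.inl ⟨a, Or.inr rfl⟩
  | top => exact absurd hxy not_top_lt

theorem eq_univ_of_isom_univ (hS : IsClosedConvex S) (h : Isom univ S) : S = univ := by
  obtain ⟨hbot, htop⟩ := (h.hasInfiniteTriangle hasInfiniteTriangle_univ).bot_mem_and_top_mem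
  obtain rfl | ⟨x, y, -, rfl⟩ := hS
  · exact absurd hbot (notMem_empty _)
  rw [le_bot_iff.1 hbot.1, top_le_iff.1 htop.2, Icc_bot_top]

end IsClosedConvex

/-- two distinct closed convex subsets of `ℝ̂` are isometric iff they are
both singletons, or both closed intervals with more than one point and the same finite
diameter, or both closed intervals with one real endpoint and one infinite endpoint. -/
theorem isometric_closed_convex_characterisation (M N : Set EReal)
    (hM : IsClosedConvex M) (hN : IsClosedConvex N) (hMN : M ≠ N) :
    Isom M N ↔
      ((∃ x, M = {x}) ∧ (∃ y, N = {y})) ∨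
      ((∃ x ∈ M, ∃ y ∈ M, x ≠ y) ∧ (∃ x ∈ N, ∃ y ∈ N, x ≠ y) ∧
        diam M = diam N ∧ diam M ≠ ⊤) ∨
      ((∃ a : ℝ, M = Set.Icc ⊥ (a : EReal) ∨ M = Set.Icc (a : EReal) ⊤) ∧
        (∃ b : ℝ, N = Set.Icc ⊥ (b : EReal) ∨ N = Set.Icc (b : EReal) ⊤)) := by
  constructor
  · intro h
    obtain hMs | hMnt := M.subsingleton_or_nontrivial
    · obtain ⟨f, hf, -⟩ := h
      obtain rfl | ⟨x, rfl⟩ := hMs.eq_empty_or_singleton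
      · exact absurd (by rw [← hf.image_eq, image_empty]) hMN
      · exact Or.inl ⟨⟨x, rfl⟩, f x, by rw [← hf.image_eq, image_singleton]⟩
    have hNnt := h.nontrivial hMnt
    by_cases hd : diam M = ⊤
    swap
    · exact Or.inr (Or.inl ⟨hMnt, hNnt, h.diam_eq, hd⟩)
    obtain hMh | rfl := hM.isHalfLine_or_eq_univ hMnt hd
    · obtain hNh | rfl := hN.isHalfLine_or_eq_univ hNnt (h.diam_eq ▸ hd)
      · exact Or.inr (Or.inr ⟨hMh, hNh⟩)
      · exact absurd (hM.eq_univ_of_isom_univ h.symm) hMN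
    · exact absurd (hN.eq_univ_of_isom_univ h).symm hMN
  · rintro (⟨⟨x, rfl⟩, y, rfl⟩ | ⟨hMnt, hNnt, hdiam, hfin⟩ | ⟨hMh, hNh⟩)
    · exact isom_singleton x y
    · obtain ⟨a, b, hab, rfl⟩ := hM.exists_coe_of_diam_ne_top hMnt hfin
      obtain ⟨c, d, hcd, rfl⟩ := hN.exists_coe_of_diam_ne_top hNnt (hdiam ▸ hfin)
      rw [diam_Icc_coe_coe hab, diam_Icc_coe_coe hcd,
        ENNReal.ofReal_eq_ofReal_iff (sub_nonneg.2 hab) (sub_nonneg.2 hcd)] at hdiam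
      exact isom_Icc_coe_coe_of_sub_eq hdiam
    · exact IsHalfLine.isom hMh hNh
end
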